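/- arXiv:0711.4708 — 3 statements merged into one kernel-verified Lean document; each statement's English description precedes it below -/
import Mathlib

section
/- Under the Feshbach–Schur hypotheses, T is bijective if and only if F_P(T) is invertible on the range of P, i.e. if and only if there exists G ∈ B(ℋ) with G = P G P and G F_P(T) = F_P(T) G = P. -/
/-!
Write `Q = 1 - P`. Since `S P = P S = 0`, the elements `P T S` and `S T P` square to zero, so
`1 - P T S` and `1 - S T P` are units, and multiplying `T` by them on either side eliminates the
off-diagonal blocks: `(1 - P T S) T (1 - S T P) = F_P(T) + Q T Q`. A block-diagonal element is a
unit iff each block is invertible in its corner ring, and `Q T Q` is, with inverse `S`.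
-/

section

variable {A : Type*} [Ring A]

/-- `b` inverts `a` in the corner ring `e A e`, i.e. `a` is invertible on the range of `e`. -/
def IsCornerInverse (e a b : A) : Prop :=
  b = e * b * e ∧ b * a = e ∧ a * b = e

def feshbachSchur (P T S : A) : A :=
  P * T * P - P * T * (1 - P) * S * (1 - P) * T * P

namespace IsIdempotentElem

variable {e x y : A}

theorem mul_mul_mul_mul_eq (he : IsIdempotentElem e) (a : A) :
    e * (e * a * e) * e = e * a * e := by
  obtain ⟨h₁, h₂⟩ := (Subsemigroup.mem_corner_iff he).1 ⟨a, rfl⟩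
  rw [h₁, h₂]

theorem mul_eq_and_mul_eq_of_eq_mul_mul (he : IsIdempotentElem e) (hx : x = e * x * e) :
    e * x = x ∧ x * e = x :=
  (Subsemigroup.mem_corner_iff he).1 ⟨x, hx.symm⟩

theorem mul_eq_zero_and_mul_eq_zero (he : IsIdempotentElem e) (hx : x = e * x * e)
    (hy : y = (1 - e) * y * (1 - e)) : x * y = 0 ∧ y * x = 0 := by
  obtain ⟨hex, hxe⟩ := he.mul_eq_and_mul_eq_of_eq_mul_mul hx
  obtain ⟨hey, hye⟩ := he.one_sub.mul_eq_and_mul_eq_of_eq_mul_mul hy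
  constructor
  · rw [← hxe, ← hey, mul_assoc, ← mul_assoc e, he.mul_one_sub_self, zero_mul, mul_zero]
  · rw [← hye, ← hex, mul_assoc, ← mul_assoc (1 - e), he.one_sub_mul_self, zero_mul,
      mul_zero]

theorem self_mul_eq_zero_and_mul_self_eq_zero (he : IsIdempotentElem e)
    (hy : y = (1 - e) * y * (1 - e)) : e * y = 0 ∧ y * e = 0 :=
  he.mul_eq_zero_and_mul_eq_zero (by rw [he.eq, he.eq]) hy

end IsIdempotentElem

theorem isUnit_add_iff_exists_isCornerInverse {e x y s : A} (he : IsIdempotentElem e)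
    (hx : x = e * x * e) (hy : y = (1 - e) * y * (1 - e))
    (hs : IsCornerInverse (1 - e) y s) :
    IsUnit (x + y) ↔ ∃ g, IsCornerInverse e x g := by
  obtain ⟨hex, hxe⟩ := he.mul_eq_and_mul_eq_of_eq_mul_mul hx
  constructor
  · rintro ⟨u, hu⟩
    obtain ⟨hey, hye⟩ := he.self_mul_eq_zero_and_mul_self_eq_zero hy
    have hux : ↑u * e = x := by rw [hu, add_mul, hxe, hye, add_zero]
    have heu : e * ↑u = x := by rw [hu, mul_add, hex, hey, add_zero]
    refine ⟨e * ↑u⁻¹ * e, (he.mul_mul_mul_mul_eq _).symm, ?_, ?_⟩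
    · calc e * ↑u⁻¹ * e * x = e * ↑u⁻¹ * x := by rw [mul_assoc _ e, hex]
        _ = e * e := by rw [← hux, ← mul_assoc, mul_assoc e, Units.inv_mul, mul_one]
        _ = e := he.eq
    · calc x * (e * ↑u⁻¹ * e) = x * ↑u⁻¹ * e := by rw [← mul_assoc, ← mul_assoc, hxe]
        _ = e * e := by rw [← heu, mul_assoc e, Units.mul_inv, mul_one]
        _ = e := he.eq
  · rintro ⟨g, hg, hgx, hxg⟩
    obtain ⟨hs, hsy, hys⟩ := hs
    obtain ⟨hgy, hyg⟩ := he.mul_eq_zero_and_mul_eq_zero hg hy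
    obtain ⟨hxs, hsx⟩ := he.mul_eq_zero_and_mul_eq_zero hx hs
    refine ⟨⟨x + y, g + s, ?_, ?_⟩, rfl⟩
    · simp only [add_mul, mul_add, hxg, hxs, hyg, hys]; abel
    · simp only [add_mul, mul_add, hgx, hgy, hsx, hsy]; abel

theorem one_sub_mul_mul_one_sub_eq_feshbachSchur_add {P T S : A} (hP : IsIdempotentElem P)
    (hS : IsCornerInverse (1 - P) ((1 - P) * T * (1 - P)) S) :
    (1 - P * T * S) * T * (1 - S * T * P) = feshbachSchur P T S + (1 - P) * T * (1 - P) := by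
  obtain ⟨hS, hSR, hRS⟩ := hS
  obtain ⟨hPS, hSP⟩ := hP.self_mul_eq_zero_and_mul_self_eq_zero hS
  obtain ⟨hQS, hSQ⟩ := hP.one_sub.mul_eq_and_mul_eq_of_eq_mul_mul hS
  have hST : S * T = 1 - P + S * T * P :=
    calc S * T = S * (1 - P) * T * (1 - P) + S * T * P := by rw [hSQ]; noncomm_ring
      _ = S * ((1 - P) * T * (1 - P)) + S * T * P := by noncomm_ring
      _ = 1 - P + S * T * P := by rw [hSR]
  have hTS : T * S = 1 - P + P * T * S :=
    calc T * S = (1 - P) * T * ((1 - P) * S) + P * T * S := by rw [hQS]; noncomm_ring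
      _ = (1 - P) * T * (1 - P) * S + P * T * S := by noncomm_ring
      _ = 1 - P + P * T * S := by rw [hRS]
  have hSTS : S * T * S = S := by
    rw [hST, add_mul, mul_assoc _ P, hPS, mul_zero, add_zero, hQS]
  have hF : feshbachSchur P T S = P * T * P - P * T * S * T * P :=
    calc feshbachSchur P T S = P * T * P - P * T * ((1 - P) * S * (1 - P)) * T * P := by
          rw [feshbachSchur]; noncomm_ring
      _ = P * T * P - P * T * S * T * P := by rw [← hS]
  calc (1 - P * T * S) * T * (1 - S * T * P)
      = T - P * T * (S * T) - T * S * T * P + P * T * (S * T * S) * T * P := by noncomm_ring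
    _ = P * T * P - P * T * S * T * P + (1 - P) * T * (1 - P) := by
      rw [hSTS, hST, hTS]; noncomm_ring
    _ = feshbachSchur P T S + (1 - P) * T * (1 - P) := by rw [hF]

theorem isUnit_one_sub_mul_mul_of_mul_eq_zero {x y : A} (z : A) (hyx : y * x = 0) :
    IsUnit (1 - x * z * y) :=
  IsNilpotent.isUnit_one_sub ⟨2, by
    rw [sq, show x * z * y * (x * z * y) = x * z * (y * x) * z * y by noncomm_ring, hyx]
    simp⟩

theorem isUnit_iff_exists_isCornerInverse_feshbachSchur {P T S : A} (hP : IsIdempotentElem P)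
    (hS : IsCornerInverse (1 - P) ((1 - P) * T * (1 - P)) S) :
    IsUnit T ↔ ∃ G, IsCornerInverse P (feshbachSchur P T S) G := by
  obtain ⟨hPS, hSP⟩ := hP.self_mul_eq_zero_and_mul_self_eq_zero hS.1
  have hF : feshbachSchur P T S = P * (T - T * (1 - P) * S * (1 - P) * T) * P := by
    rw [feshbachSchur]; noncomm_ring
  rw [← (isUnit_one_sub_mul_mul_of_mul_eq_zero T hSP).mul_left_iff,
    ← (isUnit_one_sub_mul_mul_of_mul_eq_zero T hPS).mul_right_iff,
    one_sub_mul_mul_one_sub_eq_feshbachSchur_add hP hS]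
  exact isUnit_add_iff_exists_isCornerInverse hP (by rw [hF, hP.mul_mul_mul_mul_eq])
    (hP.one_sub.mul_mul_mul_mul_eq T).symm hS

end

/-- **Feshbach–Schur isospectrality.** Under the Feshbach–Schur hypotheses
(`P` idempotent, `P̄ T P̄` invertible on the range of `P̄` with inverse `S`),
`T` is bijective iff the Feshbach–Schur operator
`F_P(T) = P T P − P T P̄ S P̄ T P` is invertible on the range of `P`, i.e. iff
there exists `G` with `G = P G P` and `G F_P(T) = F_P(T) G = P`. -/
theorem feshbach_schur_isospectrality
    {ℋ : Type*} [NormedAddCommGroup ℋ] [InnerProductSpace ℂ ℋ] [CompleteSpace ℋ]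
    (T P S : ℋ →L[ℂ] ℋ) (hP : P * P = P)
    (hS : S = (1 - P) * S * (1 - P))
    (hS1 : S * ((1 - P) * T * (1 - P)) = 1 - P)
    (hS2 : ((1 - P) * T * (1 - P)) * S = 1 - P) :
    Function.Bijective (⇑T) ↔
      ∃ G : ℋ →L[ℂ] ℋ, G = P * G * P ∧
        G * (P * T * P - P * T * (1 - P) * S * (1 - P) * T * P) = P ∧
        (P * T * P - P * T * (1 - P) * S * (1 - P) * T * P) * G = P := by
  rw [← ContinuousLinearMap.isUnit_iff_bijective]
  exact isUnit_iff_exists_isCornerInverse_feshbachSchur hP ⟨hS, hS1, hS2⟩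
end

section
/- Let ℋ be a complex Hilbert space and A ∈ B(ℋ) a self-adjoint operator with nonnegative spectrum. Let θ ∈ ℂ and w ∈ ℂ with w ≠ 0 and Re(e^{θ} w) ≥ 0. Then the operator w·1 + e^{−θ} A is invertible in B(ℋ), and ‖(w·1 + e^{−θ} A)⁻¹‖ ≤ e^{2|Re θ|} |w|⁻¹ and ‖A (w·1 + e^{−θ} A)⁻¹‖ ≤ e^{|Re θ|}. -/
/-!
Put `v = e^θ w`, so that `Re v ≥ 0` and `w + e^{-θ} t = e^{-θ} (v + t)`. For real `t ≥ 0` the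
real parts of `v` and `t` do not cancel, so `|v + t| ≥ |v|` and `|v + t| ≥ t`; that is,
`|w + e^{-θ} t| ≥ |w|` and `t ≤ e^{Re θ} |w + e^{-θ} t|` on the spectrum of `A`. As `A` is normal,
the continuous functional calculus turns these pointwise bounds into operator-norm bounds.
-/

namespace Complex

lemma norm_le_norm_add_ofReal {v : ℂ} {t : ℝ} (hv : 0 ≤ v.re) (ht : 0 ≤ t) :
    ‖v‖ ≤ ‖v + t‖ := by
  rw [norm_def, norm_def]
  gcongr
  simp only [normSq_apply, add_re, add_im, ofReal_re, ofReal_im, add_zero]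
  nlinarith

lemma le_norm_add_ofReal {v : ℂ} {t : ℝ} (hv : 0 ≤ v.re) : t ≤ ‖v + t‖ :=
  calc t ≤ v.re + t := by linarith
    _ = (v + t).re := by simp
    _ ≤ ‖v + t‖ := re_le_norm _

lemma exp_re_mul_norm_add_exp_neg_mul (θ w z : ℂ) :
    Real.exp θ.re * ‖w + exp (-θ) * z‖ = ‖exp θ * w + z‖ := by
  rw [← norm_exp, ← norm_mul, mul_add, ← mul_assoc, ← exp_add, add_neg_cancel, exp_zero, one_mul]

variable {θ w : ℂ} {t : ℝ}

lemma norm_le_norm_add_exp_neg_mul_ofReal (hRe : 0 ≤ (exp θ * w).re) (ht : 0 ≤ t) :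
    ‖w‖ ≤ ‖w + exp (-θ) * t‖ := by
  refine le_of_mul_le_mul_left ?_ (Real.exp_pos θ.re)
  rw [exp_re_mul_norm_add_exp_neg_mul, ← norm_exp, ← norm_mul]
  exact norm_le_norm_add_ofReal hRe ht

lemma le_exp_re_mul_norm_add_exp_neg_mul_ofReal (hRe : 0 ≤ (exp θ * w).re) :
    t ≤ Real.exp θ.re * ‖w + exp (-θ) * t‖ := by
  rw [exp_re_mul_norm_add_exp_neg_mul]
  exact le_norm_add_ofReal hRe

end Complex

section CFC

variable {R A : Type*} {p : A → Prop} [CommSemiring R] [StarRing R] [MetricSpace R]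
variable [IsTopologicalSemiring R] [ContinuousStar R] [TopologicalSpace A] [Ring A] [StarRing A]
variable [Algebra R A] [ContinuousFunctionalCalculus R A p]

lemma cfc_const_add_const_mul (r s : R) (a : A) (ha : p a := by cfc_tac) :
    cfc (fun x ↦ r + s * x) a = r • 1 + s • a := by
  rw [cfc_const_add r (s * ·) a, cfc_const_mul_id s a, Algebra.algebraMap_eq_smul_one]

lemma self_mul_cfc (f : R → R) (a : A) (hf : ContinuousOn f (spectrum R a) := by cfc_cont_tac)
    (ha : p a := by cfc_tac) : a * cfc f a = cfc (fun x ↦ x * f x) a := by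
  nth_rewrite 1 [← cfc_id R a]
  exact (cfc_mul id f a).symm

end CFC

open Complex in
/-- **Dilated free resolvent bound.** Let `A` be a bounded self-adjoint
operator on a complex Hilbert space with nonnegative spectrum, and let
`θ, w ∈ ℂ` with `w ≠ 0` and `Re(e^θ w) ≥ 0`. Then `w·1 + e^{−θ} A` is
invertible in `B(ℋ)`, with `‖(w·1 + e^{−θ}A)⁻¹‖ ≤ e^{2|Re θ|} |w|⁻¹` and
`‖A (w·1 + e^{−θ}A)⁻¹‖ ≤ e^{|Re θ|}`. -/
theorem dilated_free_resolvent_bound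
    {ℋ : Type*} [NormedAddCommGroup ℋ] [InnerProductSpace ℂ ℋ] [CompleteSpace ℋ]
    (A : ℋ →L[ℂ] ℋ) (hA : IsSelfAdjoint A)
    (hspec : ∀ z ∈ spectrum ℂ A, ∃ t : ℝ, 0 ≤ t ∧ z = (t : ℂ))
    (θ w : ℂ) (hw : w ≠ 0) (hRe : 0 ≤ (Complex.exp θ * w).re) :
    IsUnit (w • (1 : ℋ →L[ℂ] ℋ) + Complex.exp (-θ) • A) ∧
    ‖Ring.inverse (w • (1 : ℋ →L[ℂ] ℋ) + Complex.exp (-θ) • A)‖ ≤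
      Real.exp (2 * |θ.re|) * ‖w‖⁻¹ ∧
    ‖A * Ring.inverse (w • (1 : ℋ →L[ℂ] ℋ) + Complex.exp (-θ) • A)‖ ≤
      Real.exp |θ.re| := by
  have : IsStarNormal A := hA.isStarNormal
  set f : ℂ → ℂ := fun z ↦ w + exp (-θ) * z
  have hf_norm : ∀ z ∈ spectrum ℂ A, ‖w‖ ≤ ‖f z‖ := by
    rintro _ hz
    obtain ⟨t, ht, rfl⟩ := hspec _ hz
    exact norm_le_norm_add_exp_neg_mul_ofReal hRe ht
  have hf_ne : ∀ z ∈ spectrum ℂ A, f z ≠ 0 := fun z hz ↦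
    norm_pos_iff.mp ((norm_pos_iff.mpr hw).trans_le (hf_norm z hz))
  rw [← cfc_const_add_const_mul w (exp (-θ)) A, ← cfc_inv f A hf_ne,
    self_mul_cfc _ A (by fun_prop (disch := exact hf_ne))]
  refine ⟨(isUnit_cfc_iff f A).mpr hf_ne, norm_cfc_le (by positivity) fun z hz ↦ ?_,
    norm_cfc_le (by positivity) fun z hz ↦ ?_⟩
  · calc ‖(f z)⁻¹‖ = ‖f z‖⁻¹ := norm_inv _
      _ ≤ ‖w‖⁻¹ := inv_anti₀ (norm_pos_iff.mpr hw) (hf_norm z hz)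
      _ ≤ Real.exp (2 * |θ.re|) * ‖w‖⁻¹ :=
        le_mul_of_one_le_left (by positivity) (Real.one_le_exp (by positivity))
  · rw [norm_mul, norm_inv, ← div_eq_mul_inv, div_le_iff₀ (norm_pos_iff.mpr (hf_ne z hz))]
    obtain ⟨t, ht, rfl⟩ := hspec z hz
    calc ‖(t : ℂ)‖ = t := by simp [ht]
      _ ≤ Real.exp θ.re * ‖f t‖ := le_exp_re_mul_norm_add_exp_neg_mul_ofReal hRe
      _ ≤ Real.exp |θ.re| * ‖f t‖ := by gcongr; exact le_abs_self _
end

section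
/- Let ℋ be a complex Hilbert space and A ∈ B(ℋ) a self-adjoint operator with nonnegative spectrum. Let θ ∈ ℂ and w ∈ ℂ with w ≠ 0 and Re(e^{θ} w) ≥ 0. Then for every α ∈ [0, 1] and every φ ∈ ℋ, |⟨A^{(1−α)/2} φ, (w·1 + e^{−θ} A)⁻¹ A^{(1−α)/2} φ⟩| ≤ e^{2|Re θ|} |w|^{−α} ‖φ‖². -/
/-!
By the functional calculus, `A^β (w + e^{-θ} A)⁻¹ A^β` with `β = (1 - α)/2` is `f(A)` for
`f(t) = t^{1-α} / (w + e^{-θ} t)`, so its norm is at most `sup_{t ≥ 0} |f(t)|`. Writing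
`w + e^{-θ} t = e^{-θ} (z + t)` with `z = e^θ w`, `Re z ≥ 0`, both `t` and `|z|` are at most
`|z + t|`, and weighted AM-GM gives `t^{1-α} |z|^α ≤ (1-α) t + α |z| ≤ |z + t|`.
-/

open scoped InnerProductSpace

namespace Complex

lemma le_norm_add_ofReal_s8 {z : ℂ} (hz : 0 ≤ z.re) (t : ℝ) : t ≤ ‖z + t‖ :=
  calc t ≤ (z + t).re := by simpa using hz
    _ ≤ ‖z + t‖ := re_le_norm _

lemma norm_le_norm_add_ofReal_s8 {z : ℂ} (hz : 0 ≤ z.re) {t : ℝ} (ht : 0 ≤ t) :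
    ‖z‖ ≤ ‖z + t‖ := by
  rw [← sq_le_sq₀ (norm_nonneg _) (norm_nonneg _), Complex.sq_norm, Complex.sq_norm,
    normSq_apply, normSq_apply]
  simp only [add_re, add_im, ofReal_re, ofReal_im, add_zero]
  nlinarith

lemma rpow_one_sub_mul_norm_rpow_le_norm_add_ofReal {z : ℂ} (hz : 0 ≤ z.re) {t α : ℝ}
    (ht : 0 ≤ t) (hα : α ∈ Set.Icc (0 : ℝ) 1) : t ^ (1 - α) * ‖z‖ ^ α ≤ ‖z + t‖ := by
  obtain ⟨hα0, hα1⟩ := hα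
  calc t ^ (1 - α) * ‖z‖ ^ α ≤ (1 - α) * t + α * ‖z‖ :=
        Real.geom_mean_le_arith_mean2_weighted (by linarith) hα0 ht (norm_nonneg _) (by ring)
    _ ≤ (1 - α) * ‖z + t‖ + α * ‖z + t‖ := by
        have : 0 ≤ 1 - α := by linarith
        gcongr
        exacts [le_norm_add_ofReal_s8 hz t, norm_le_norm_add_ofReal_s8 hz ht]
    _ = ‖z + t‖ := by ring

lemma norm_add_exp_neg_mul_ofReal (θ w : ℂ) (t : ℝ) :
    ‖w + exp (-θ) * t‖ = Real.exp (-θ.re) * ‖exp θ * w + t‖ := by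
  have : w + exp (-θ) * t = exp (-θ) * (exp θ * w + t) := by
    rw [mul_add, ← mul_assoc, ← exp_add, neg_add_cancel, exp_zero, one_mul]
  rw [this, norm_mul, norm_exp, neg_re]

lemma add_exp_neg_mul_ofReal_ne_zero {θ w : ℂ} (hw : w ≠ 0) (hRe : 0 ≤ (exp θ * w).re)
    {t : ℝ} (ht : 0 ≤ t) : w + exp (-θ) * t ≠ 0 := by
  rw [← norm_pos_iff, norm_add_exp_neg_mul_ofReal]
  exact mul_pos (Real.exp_pos _) <| (norm_pos_iff.2 (mul_ne_zero (exp_ne_zero θ) hw)).trans_le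
    (norm_le_norm_add_ofReal_s8 hRe ht)

lemma rpow_one_sub_le_mul_norm_add_exp_neg_mul_ofReal {θ w : ℂ} (hw : w ≠ 0)
    (hRe : 0 ≤ (exp θ * w).re) {t α : ℝ} (ht : 0 ≤ t) (hα : α ∈ Set.Icc (0 : ℝ) 1) :
    t ^ (1 - α) ≤ Real.exp |θ.re| * ‖w‖ ^ (-α) * ‖w + exp (-θ) * t‖ := by
  set z := exp θ * w
  have hz : ‖z‖ = Real.exp θ.re * ‖w‖ := by rw [norm_mul, norm_exp]
  have hz_pos : 0 < ‖z‖ := norm_pos_iff.2 (mul_ne_zero (exp_ne_zero θ) hw)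
  calc t ^ (1 - α) ≤ ‖z‖ ^ (-α) * ‖z + t‖ := by
        rw [Real.rpow_neg hz_pos.le, ← div_eq_inv_mul, le_div_iff₀ (by positivity)]
        exact rpow_one_sub_mul_norm_rpow_le_norm_add_ofReal hRe ht hα
    _ = Real.exp (θ.re * (1 - α)) * ‖w‖ ^ (-α) * ‖w + exp (-θ) * t‖ := by
        rw [norm_add_exp_neg_mul_ofReal, hz, Real.mul_rpow (Real.exp_pos _).le (norm_nonneg _),
          ← Real.exp_mul, show θ.re * -α = θ.re * (1 - α) + -θ.re by ring, Real.exp_add]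
        ring
    _ ≤ Real.exp |θ.re| * ‖w‖ ^ (-α) * ‖w + exp (-θ) * t‖ := by
        gcongr
        nlinarith [mul_le_mul_of_nonneg_right (le_abs_self θ.re) (sub_nonneg.2 hα.2),
          mul_nonneg (abs_nonneg θ.re) hα.1]

end Complex

section CStarAlgebra

variable {A : Type*} [CStarAlgebra A]

lemma ring_inverse_smul_one_add_smul_eq_cfc {a : A} (ha : IsStarNormal a) {w c : ℂ}
    (h : ∀ z ∈ spectrum ℂ a, w + c * z ≠ 0) :
    Ring.inverse (w • (1 : A) + c • a) = cfc (fun z ↦ (w + c * z)⁻¹) a := by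
  rw [cfc_inv (fun z ↦ w + c * z) a h, cfc_const_add w (c * ·) a, cfc_const_mul_id c a,
    Algebra.algebraMap_eq_smul_one]

open Complex in
lemma norm_cfc_rpow_mul_ring_inverse_mul_cfc_rpow_le {a : A} (ha : IsSelfAdjoint a)
    (hspec : ∀ z ∈ spectrum ℂ a, ∃ t : ℝ, 0 ≤ t ∧ z = (t : ℂ)) {θ w : ℂ} (hw : w ≠ 0)
    (hRe : 0 ≤ (exp θ * w).re) {α : ℝ} (hα : α ∈ Set.Icc (0 : ℝ) 1) :
    ‖cfc (fun t : ℝ ↦ t ^ ((1 - α) / 2)) a * Ring.inverse (w • (1 : A) + exp (-θ) • a) *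
        cfc (fun t : ℝ ↦ t ^ ((1 - α) / 2)) a‖ ≤ Real.exp |θ.re| * ‖w‖ ^ (-α) := by
  have hR : ∀ z ∈ spectrum ℂ a, w + exp (-θ) * z ≠ 0 := by
    rintro _ hz
    obtain ⟨t, ht, rfl⟩ := hspec _ hz
    exact add_exp_neg_mul_ofReal_ne_zero hw hRe ht
  rw [cfc_real_eq_complex _ ha, ring_inverse_smul_one_add_smul_eq_cfc ha.isStarNormal hR]
  set F : ℂ → ℂ := fun z ↦ ((z.re ^ ((1 - α) / 2) : ℝ) : ℂ)
  set G : ℂ → ℂ := fun z ↦ (w + exp (-θ) * z)⁻¹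
  have hF : ContinuousOn F (spectrum ℂ a) :=
    (continuous_ofReal.comp ((Real.continuous_rpow_const (by linarith [hα.2])).comp
      continuous_re)).continuousOn
  have hG : ContinuousOn G (spectrum ℂ a) :=
    (continuousOn_const.add (continuousOn_const.mul continuousOn_id)).inv₀ hR
  rw [← cfc_mul F G a hF hG, ← cfc_mul (fun z ↦ F z * G z) F a (hF.mul hG) hF]
  refine norm_cfc_le (by positivity) ?_
  rintro _ hz
  obtain ⟨t, ht, rfl⟩ := hspec _ hz
  have hsq : t ^ ((1 - α) / 2) * t ^ ((1 - α) / 2) = t ^ (1 - α) := by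
    rw [← sq, ← Real.rpow_two, ← Real.rpow_mul ht]
    ring_nf
  have hpos : 0 < ‖w + exp (-θ) * t‖ :=
    norm_pos_iff.2 (add_exp_neg_mul_ofReal_ne_zero hw hRe ht)
  calc _ = t ^ (1 - α) / ‖w + exp (-θ) * t‖ := by
        simp only [F, G, ofReal_re, norm_mul, norm_inv, norm_real, Real.norm_eq_abs,
          abs_of_nonneg (Real.rpow_nonneg ht _), ← hsq]
        ring
    _ ≤ Real.exp |θ.re| * ‖w‖ ^ (-α) := by
        rw [div_le_iff₀ hpos]
        exact rpow_one_sub_le_mul_norm_add_exp_neg_mul_ofReal hw hRe ht hα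

end CStarAlgebra

lemma ContinuousLinearMap.norm_inner_apply_self_le {𝕜 E : Type*} [RCLike 𝕜]
    [NormedAddCommGroup E] [InnerProductSpace 𝕜 E] (T : E →L[𝕜] E) (x : E) :
    ‖⟪x, T x⟫_𝕜‖ ≤ ‖T‖ * ‖x‖ ^ 2 :=
  calc ‖⟪x, T x⟫_𝕜‖ ≤ ‖x‖ * (‖T‖ * ‖x‖) :=
        (norm_inner_le_norm _ _).trans (by gcongr; exact T.le_opNorm x)
    _ = ‖T‖ * ‖x‖ ^ 2 := by ring

/-- **Interpolated dilated resolvent bound.** Let `A` be a bounded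
self-adjoint operator on a complex Hilbert space with nonnegative spectrum,
`θ, w ∈ ℂ` with `w ≠ 0` and `Re(e^θ w) ≥ 0`. Then for every `α ∈ [0,1]` and
every `φ`,
`|⟨A^{(1−α)/2} φ, (w·1 + e^{−θ}A)⁻¹ A^{(1−α)/2} φ⟩| ≤ e^{2|Re θ|} |w|^{−α} ‖φ‖²`,
where the fractional power `A^{(1−α)/2}` is defined by the continuous
functional calculus (`cfc`). -/
theorem interpolated_dilated_resolvent_bound
    {ℋ : Type*} [NormedAddCommGroup ℋ] [InnerProductSpace ℂ ℋ] [CompleteSpace ℋ]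
    (A : ℋ →L[ℂ] ℋ) (hA : IsSelfAdjoint A)
    (hspec : ∀ z ∈ spectrum ℂ A, ∃ t : ℝ, 0 ≤ t ∧ z = (t : ℂ))
    (θ w : ℂ) (hw : w ≠ 0) (hRe : 0 ≤ (Complex.exp θ * w).re)
    (α : ℝ) (hα : α ∈ Set.Icc (0 : ℝ) 1) (φ : ℋ) :
    ‖⟪cfc (fun t : ℝ => t ^ ((1 - α) / 2)) A φ,
          Ring.inverse (w • (1 : ℋ →L[ℂ] ℋ) + Complex.exp (-θ) • A)
            (cfc (fun t : ℝ => t ^ ((1 - α) / 2)) A φ)⟫_ℂ‖ ≤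
      Real.exp (2 * |θ.re|) * ‖w‖ ^ (-α) * ‖φ‖ ^ 2 := by
  set B := cfc (fun t : ℝ => t ^ ((1 - α) / 2)) A
  set R := Ring.inverse (w • (1 : ℋ →L[ℂ] ℋ) + Complex.exp (-θ) • A)
  have hB : IsSelfAdjoint B := cfc_predicate _ A
  calc ‖⟪B φ, R (B φ)⟫_ℂ‖ = ‖⟪φ, (B * R * B) φ⟫_ℂ‖ :=
        congrArg norm (hB.isSymmetric φ (R (B φ)))
    _ ≤ ‖B * R * B‖ * ‖φ‖ ^ 2 := (B * R * B).norm_inner_apply_self_le φ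
    _ ≤ Real.exp |θ.re| * ‖w‖ ^ (-α) * ‖φ‖ ^ 2 := by
        gcongr
        exact norm_cfc_rpow_mul_ring_inverse_mul_cfc_rpow_le hA hspec hw hRe hα
    _ ≤ Real.exp (2 * |θ.re|) * ‖w‖ ^ (-α) * ‖φ‖ ^ 2 := by
        gcongr
        linarith [abs_nonneg θ.re]
end
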